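/- arXiv:2005.12851 — 2 statements merged into one kernel-verified Lean document; each statement's English description precedes it below -/
import Mathlib

section
/- The solvability set I(p₀) is a closed subset of ℝ: if a sequence sₙ ∈ I(p₀) converges to s, then s ∈ I(p₀). -/
/-!
Normalize the solutions `xₙ` for `sₙ → s` so that `xₙ 0 ∈ [0, 2π)`. In the phase variables
`y = φ(x')` the equation is the first-order system `x' = ψ y`, `y' = p - a ψ y - b sin x`
with `ψ = φ⁻¹`, whose right-hand side is Lipschitz in `(x, y)` uniformly in `t`, and since `x'`
vanishes somewhere on each period, `|y| ≤ (‖p‖∞ + |a| c + |b|) T`. Hence the initial values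
`(xₙ 0, yₙ 0)` have a convergent subsequence, Grönwall's inequality on one period makes the
periodic phase curves uniformly Cauchy, and their uniform limit is a periodic trajectory of the
limit system, i.e. a solution for `s`.
-/

open Real Set MeasureTheory

/-- The relativistic operator `φ(v) = v / √(1 - v²/c²)`. -/
noncomputable def phi (c v : ℝ) : ℝ := v / Real.sqrt (1 - v ^ 2 / c ^ 2)

/-- `x` is a `T`-periodic solution of the relativistic pendulum equation
`(φ(x'))' + a x' + b sin x = p`. -/
def IsPendSol (c a b T : ℝ) (p x : ℝ → ℝ) : Prop :=
  Function.Periodic x T ∧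
  ContDiff ℝ 1 x ∧
  (∀ t : ℝ, |deriv x t| < c) ∧
  ContDiff ℝ 1 (fun t : ℝ => phi c (deriv x t)) ∧
  ∀ t : ℝ, deriv (fun τ : ℝ => phi c (deriv x τ)) t + a * deriv x t + b * Real.sin (x t) = p t

/-- The solvability set `I(p₀)`: the values `s` for which the relativistic pendulum
equation with forcing `p₀ + s` has a `T`-periodic solution. -/
def solvSet (c a b T : ℝ) (p₀ : ℝ → ℝ) : Set ℝ :=
  {s : ℝ | ∃ x : ℝ → ℝ, IsPendSol c a b T (fun t => p₀ t + s) x}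

open Function Filter Topology
open scoped NNReal

theorem Real.lipschitzWith_arctan : LipschitzWith 1 arctan := by
  refine lipschitzWith_of_nnnorm_deriv_le differentiable_arctan fun x => ?_
  rw [← NNReal.coe_le_coe, coe_nnnorm, deriv_arctan, NNReal.coe_one, norm_div, norm_one,
    Real.norm_of_nonneg (by positivity)]
  exact div_le_one_of_le₀ (by nlinarith) (by positivity)

theorem Function.Periodic.abs_le_of_abs_deriv_le {f : ℝ → ℝ} {T L t₀ : ℝ} (hf : Periodic f T)
    (hT : 0 < T) (hdiff : Differentiable ℝ f) (hbound : ∀ t, |deriv f t| ≤ L) (ht₀ : f t₀ = 0)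
    (t : ℝ) : |f t| ≤ L * T := by
  obtain ⟨t', ht', hft⟩ := hf.exists_mem_Ico hT t t₀
  have hmvt := Convex.norm_image_sub_le_of_norm_deriv_le (fun s _ => hdiff s)
    (fun s _ => hbound s) convex_univ (mem_univ t₀) (mem_univ t')
  rw [ht₀, sub_zero, ← hft, Real.norm_eq_abs, Real.norm_eq_abs, abs_of_nonneg (sub_nonneg.2 ht'.1)]
    at hmvt
  have hL : 0 ≤ L := (abs_nonneg _).trans (hbound t)
  exact hmvt.trans (mul_le_mul_of_nonneg_left (by linarith [ht'.2]) hL)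

theorem Function.Periodic.deriv {f : ℝ → ℝ} {T : ℝ} (hf : Periodic f T) :
    Periodic (deriv f) T := fun t => by
  rw [← deriv_comp_add_const, funext hf]

section UniformLimits

variable {ι α β γ : Type*}

theorem UniformEquicontinuous.comp_tendstoUniformly [UniformSpace β] [UniformSpace γ]
    {g : α → β → γ} (hg : UniformEquicontinuous g) {F : ι → α → β} {f : α → β} {l : Filter ι}
    (hF : TendstoUniformly F f l) :
    TendstoUniformly (fun n x => g x (F n x)) (fun x => g x (f x)) l := fun U hU => by
  filter_upwards [hF _ (hg U hU)] with n hn x using hn x x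

theorem TendstoUniformly.of_dist_le [PseudoMetricSpace β] {F G : ι → α → β} {f : α → β}
    {l : Filter ι} (hF : TendstoUniformly F f l) {ε : ι → ℝ} (hε : Tendsto ε l (𝓝 0))
    (hG : ∀ n x, dist (G n x) (F n x) ≤ ε n) : TendstoUniformly G f l := by
  rw [Metric.tendstoUniformly_iff] at hF ⊢
  intro δ hδ
  filter_upwards [hF _ (half_pos hδ), hε.eventually (gt_mem_nhds (half_pos hδ))] with n hn hεn x
  calc dist (f x) (G n x) ≤ dist (f x) (F n x) + dist (G n x) (F n x) := dist_triangle_right _ _ _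
    _ < δ / 2 + δ / 2 := add_lt_add_of_lt_of_le (hn x) ((hG n x).trans hεn.le)
    _ = δ := add_halves δ

theorem exists_tendstoUniformly_of_dist_le [Nonempty ι] [SemilatticeSup ι] [PseudoMetricSpace β]
    [CompleteSpace β] {F : ι → α → β} {b : ι × ι → ℝ} (hb : Tendsto b (atTop ×ˢ atTop) (𝓝 0))
    (hF : ∀ m n x, dist (F m x) (F n x) ≤ b (m, n)) : ∃ f, TendstoUniformly F f atTop := by
  have hcauchy : UniformCauchySeqOn F atTop univ := fun U hU => by
    obtain ⟨ε, hε, hεU⟩ := Metric.mem_uniformity_dist.1 hU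
    filter_upwards [hb.eventually (gt_mem_nhds hε)] with mn hmn x _
    exact hεU ((hF mn.1 mn.2 x).trans_lt hmn)
  choose f hf using fun x => cauchySeq_tendsto_of_complete (hcauchy.cauchySeq (mem_univ x))
  exact ⟨f, tendstoUniformlyOn_univ.1 (hcauchy.tendstoUniformlyOn_of_tendsto fun x _ => hf x)⟩

end UniformLimits

theorem continuous_gronwallBound (K x : ℝ) :
    Continuous fun q : ℝ × ℝ => gronwallBound q.1 K q.2 x := by
  by_cases hK : K = 0
  · simp only [gronwallBound_K0, hK]
    fun_prop
  · simp only [gronwallBound_of_K_ne_0 hK]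
    fun_prop

section PeriodicTrajectories

variable {E : Type*} [NormedAddCommGroup E] [NormedSpace ℝ E] {v : ℝ → E → E} {K : ℝ≥0}
  {T : ℝ}

theorem dist_le_gronwallBound_of_periodic (hv : ∀ t, LipschitzWith K (v t)) (hT : 0 < T)
    {f g f' g' : ℝ → E} {εf εg : ℝ} (hfT : Periodic f T) (hgT : Periodic g T)
    (hf : ∀ t, HasDerivAt f (f' t) t) (hg : ∀ t, HasDerivAt g (g' t) t)
    (hf' : ∀ t, dist (f' t) (v t (f t)) ≤ εf) (hg' : ∀ t, dist (g' t) (v t (g t)) ≤ εg)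
    (t : ℝ) : dist (f t) (g t) ≤ gronwallBound (dist (f 0) (g 0)) K (εf + εg) T := by
  have hdist : Periodic (fun t => dist (f t) (g t)) T := fun t => by simp only [hfT t, hgT t]
  obtain ⟨t', ht', heq⟩ := hdist.exists_mem_Ico₀ hT t
  have hgron := dist_le_of_approx_trajectories_ODE hv
    (continuous_iff_continuousAt.2 fun t => (hf t).continuousAt).continuousOn
    (fun t _ => (hf t).hasDerivWithinAt) (fun t _ => hf' t)
    (continuous_iff_continuousAt.2 fun t => (hg t).continuousAt).continuousOn
    (fun t _ => (hg t).hasDerivWithinAt) (fun t _ => hg' t) le_rfl t' (Ico_subset_Icc_self ht')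
  rw [sub_zero] at hgron
  have hε : 0 ≤ εf + εg := add_nonneg (dist_nonneg.trans (hf' 0)) (dist_nonneg.trans (hg' 0))
  exact heq ▸ hgron.trans (gronwallBound_mono dist_nonneg hε K.2 ht'.2.le)

theorem exists_periodic_hasDerivAt_of_approx [CompleteSpace E] (hv : ∀ t, LipschitzWith K (v t))
    (hT : 0 < T) {w : ℕ → ℝ → E → E} {ε : ℕ → ℝ} (hε : Tendsto ε atTop (𝓝 0))
    (hw : ∀ n t z, dist (w n t z) (v t z) ≤ ε n) {Z : ℕ → ℝ → E} (hZT : ∀ n, Periodic (Z n) T)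
    (hZ : ∀ n t, HasDerivAt (Z n) (w n t (Z n t)) t) (hZ0 : CauchySeq fun n => Z n 0) :
    ∃ z : ℝ → E, Periodic z T ∧ ∀ t, HasDerivAt z (v t (z t)) t := by
  have hb : Tendsto (fun mn : ℕ × ℕ => gronwallBound (dist (Z mn.1 0) (Z mn.2 0)) K
      (ε mn.1 + ε mn.2) T) (atTop ×ˢ atTop) (𝓝 0) := by
    have hdist := cauchySeq_iff_tendsto_dist_atTop_0.1 hZ0
    rw [← prod_atTop_atTop_eq] at hdist
    have hεε : Tendsto (fun mn : ℕ × ℕ => ε mn.1 + ε mn.2) (atTop ×ˢ atTop) (𝓝 0) := by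
      simpa only [add_zero, comp_apply] using (hε.comp tendsto_fst).add (hε.comp tendsto_snd)
    simpa only [gronwallBound_ε0_δ0, comp_def] using
      ((continuous_gronwallBound K T).tendsto (0, 0)).comp (hdist.prodMk_nhds hεε)
  obtain ⟨z, hz⟩ := exists_tendstoUniformly_of_dist_le hb fun m n =>
    dist_le_gronwallBound_of_periodic hv hT (hZT m) (hZT n) (hZ m) (hZ n)
      (fun t => hw m t _) (fun t => hw n t _)
  have hlim (t : ℝ) : Tendsto (fun n => Z n t) atTop (𝓝 (z t)) := hz.tendsto_at t
  refine ⟨z, fun t => tendsto_nhds_unique ?_ (hlim t), ?_⟩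
  · simpa only [hZT _ t] using hlim (t + T)
  · have hvZ := (LipschitzWith.uniformEquicontinuous v K hv).comp_tendstoUniformly hz
    exact hasDerivAt_of_tendstoUniformly (hvZ.of_dist_le hε fun n t => hw n t _)
      (Eventually.of_forall (hZ ·)) hlim

end PeriodicTrajectories

namespace RelPend

variable {c a b T : ℝ} {p x : ℝ → ℝ}

/-- The inverse of `phi c`, read off from `phi c (c * sin θ) = c * tan θ` for `cos θ > 0`. -/
noncomputable def psi (c w : ℝ) : ℝ := c * sin (arctan (w / c))

theorem phi_mul_sin (hc : 0 < c) {θ : ℝ} (hθ : 0 < cos θ) : phi c (c * sin θ) = c * tan θ := by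
  have h : 1 - (c * sin θ) ^ 2 / c ^ 2 = cos θ ^ 2 := by
    rw [mul_pow, mul_div_cancel_left₀ _ (pow_ne_zero 2 hc.ne'), cos_sq']
  rw [phi, h, sqrt_sq hθ.le, tan_eq_sin_div_cos, mul_div_assoc]

theorem phi_psi (hc : 0 < c) (w : ℝ) : phi c (psi c w) = w := by
  rw [psi, phi_mul_sin hc (cos_arctan_pos _), tan_arctan, mul_div_cancel₀ _ hc.ne']

theorem psi_phi (hc : 0 < c) {v : ℝ} (hv : |v| < c) : psi c (phi c v) = v := by
  have hvc : |v / c| < 1 := by rwa [abs_div, abs_of_pos hc, div_lt_one hc]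
  obtain ⟨hlo, hhi⟩ := abs_lt.1 hvc
  set θ := arcsin (v / c)
  have hv : v = c * sin θ := by rw [sin_arcsin hlo.le hhi.le, mul_div_cancel₀ _ hc.ne']
  have hθ : θ ∈ Ioo (-(π / 2)) (π / 2) :=
    ⟨neg_pi_div_two_lt_arcsin.2 hlo, arcsin_lt_pi_div_two.2 hhi⟩
  rw [hv, phi_mul_sin hc (cos_pos_of_mem_Ioo hθ), psi, mul_div_cancel_left₀ _ hc.ne',
    arctan_tan hθ.1 hθ.2]

theorem abs_psi_lt (hc : 0 < c) (w : ℝ) : |psi c w| < c := by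
  have hsin : |sin (arctan (w / c))| < 1 := by
    rw [← sq_lt_one_iff_abs_lt_one, sin_sq]
    linarith [pow_pos (cos_arctan_pos (w / c)) 2]
  rw [psi, abs_mul, abs_of_pos hc]
  exact mul_lt_of_lt_one_right hc hsin

theorem lipschitzWith_psi (hc : 0 < c) : LipschitzWith 1 (psi c) := by
  refine LipschitzWith.of_dist_le_mul fun w w' => ?_
  calc dist (psi c w) (psi c w') = c * dist (sin (arctan (w / c))) (sin (arctan (w' / c))) := by
        rw [psi, psi, dist_eq, dist_eq, ← mul_sub, abs_mul, abs_of_pos hc]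
    _ ≤ c * dist (w / c) (w' / c) := by
        gcongr
        simpa using (lipschitzWith_sin.comp lipschitzWith_arctan).dist_le_mul (w / c) (w' / c)
    _ = (1 : ℝ≥0) * dist w w' := by
        rw [dist_eq, dist_eq, ← sub_div, abs_div, abs_of_pos hc, NNReal.coe_one, one_mul]
        field_simp

@[fun_prop]
theorem continuous_psi (hc : 0 < c) : Continuous (psi c) := (lipschitzWith_psi hc).continuous

/-- The pendulum equation as a first-order system in the phase variables `(x, φ(x'))`. -/
noncomputable def pendField (c a b : ℝ) (p : ℝ → ℝ) (t : ℝ) (z : ℝ × ℝ) : ℝ × ℝ :=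
  (psi c z.2, p t - a * psi c z.2 - b * sin z.1)

theorem lipschitzWith_pendField (hc : 0 < c) (a b : ℝ) (p : ℝ → ℝ) (t : ℝ) :
    LipschitzWith (1 + ‖a‖₊ + ‖b‖₊) (pendField c a b p t) := by
  have hpsi : LipschitzWith 1 fun z : ℝ × ℝ => psi c z.2 := by
    simpa [comp_def] using (lipschitzWith_psi hc).comp LipschitzWith.prod_snd
  have hsin : LipschitzWith 1 fun z : ℝ × ℝ => sin z.1 := by
    simpa [comp_def] using lipschitzWith_sin.comp LipschitzWith.prod_fst
  have hsnd : LipschitzWith (‖a‖₊ + ‖b‖₊) fun z : ℝ × ℝ => p t - a * psi c z.2 - b * sin z.1 := by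
    simpa [comp_def] using ((LipschitzWith.const (p t)).sub ((lipschitzWith_smul a).comp hpsi)).sub
      ((lipschitzWith_smul b).comp hsin)
  refine (hpsi.prodMk hsnd).weaken (max_le ?_ ?_)
  · rw [add_assoc]; exact le_self_add
  · rw [add_assoc]; exact le_add_self

theorem dist_pendField (c a b : ℝ) (p q : ℝ → ℝ) (t : ℝ) (z : ℝ × ℝ) :
    dist (pendField c a b p t z) (pendField c a b q t z) = dist (p t) (q t) := by
  simp only [pendField, Prod.dist_eq, dist_self, dist_sub_right, dist_nonneg, max_eq_right]

noncomputable def phaseCurve (c : ℝ) (x : ℝ → ℝ) (t : ℝ) : ℝ × ℝ := (x t, phi c (deriv x t))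

theorem IsPendSol.periodic_phaseCurve (h : IsPendSol c a b T p x) :
    Periodic (phaseCurve c x) T := fun t => by
  simp only [phaseCurve, h.1 t, h.1.deriv t]

theorem IsPendSol.hasDerivAt_phaseCurve (hc : 0 < c) (h : IsPendSol c a b T p x) (t : ℝ) :
    HasDerivAt (phaseCurve c x) (pendField c a b p t (phaseCurve c x t)) t := by
  obtain ⟨-, hx, hxc, hy, heq⟩ := h
  have hpsi : psi c (phi c (deriv x t)) = deriv x t := psi_phi hc (hxc t)
  have hfield : pendField c a b p t (phaseCurve c x t)
      = (deriv x t, deriv (fun τ => phi c (deriv x τ)) t) := by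
    simp only [pendField, phaseCurve, hpsi, Prod.mk.injEq, true_and]
    linarith [heq t]
  rw [hfield]
  exact ((hx.differentiable one_ne_zero t).hasDerivAt).prodMk
    (hy.differentiable one_ne_zero t).hasDerivAt

theorem isPendSol_of_hasDerivAt (hc : 0 < c) (hp : Continuous p) {z : ℝ → ℝ × ℝ}
    (hz : Periodic z T) (hderiv : ∀ t, HasDerivAt z (pendField c a b p t (z t)) t) :
    IsPendSol c a b T p fun t => (z t).1 := by
  have hzc : Continuous z := continuous_iff_continuousAt.2 fun t => (hderiv t).continuousAt
  have hxd : ∀ t, HasDerivAt (fun t => (z t).1) (psi c (z t).2) t := fun t => (hderiv t).fst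
  have hyd : ∀ t, HasDerivAt (fun t => (z t).2) (p t - a * psi c (z t).2 - b * sin (z t).1) t :=
    fun t => (hderiv t).snd
  have hderiv_x : deriv (fun t => (z t).1) = fun t => psi c (z t).2 := funext fun t => (hxd t).deriv
  have hphi : (fun t => phi c (deriv (fun t => (z t).1) t)) = fun t => (z t).2 := by
    simp only [hderiv_x, phi_psi hc]
  refine ⟨fun t => by simp only [hz t], ?_, fun t => ?_, ?_, fun t => ?_⟩
  · exact contDiff_one_iff_deriv.2 ⟨fun t => (hxd t).differentiableAt,
      by rw [hderiv_x]; exact (continuous_psi hc).comp hzc.snd⟩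
  · rw [hderiv_x]; exact abs_psi_lt hc _
  · rw [hphi]
    refine contDiff_one_iff_deriv.2 ⟨fun t => (hyd t).differentiableAt, ?_⟩
    rw [funext fun t => (hyd t).deriv]
    fun_prop
  · rw [hphi, (hyd t).deriv, hderiv_x]
    ring

theorem IsPendSol.sub_int_mul_two_pi (h : IsPendSol c a b T p x) (k : ℤ) :
    IsPendSol c a b T p fun t => x t - k * (2 * π) := by
  obtain ⟨hper, hx, hxc, hy, heq⟩ := h
  have hderiv : deriv (fun t => x t - k * (2 * π)) = deriv x := funext fun t => deriv_sub_const _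
  refine ⟨fun t => by simp only [hper t], hx.sub contDiff_const, ?_, ?_, ?_⟩ <;>
    simp only [hderiv, sin_sub_int_mul_two_pi]
  exacts [hxc, hy, heq]

theorem IsPendSol.abs_phi_deriv_le (hT : 0 < T) (h : IsPendSol c a b T p x) {P : ℝ}
    (hp : ∀ t, |p t| ≤ P) (t : ℝ) : |phi c (deriv x t)| ≤ (P + |a| * c + |b|) * T := by
  obtain ⟨hper, hx, hxc, hy, heq⟩ := h
  obtain ⟨t₀, -, hcrit⟩ :=
    exists_deriv_eq_zero hT hx.continuous.continuousOn (by simpa using (hper 0).symm)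
  have hyper : Periodic (fun τ => phi c (deriv x τ)) T := hper.deriv.comp (phi c)
  refine hyper.abs_le_of_abs_deriv_le hT (hy.differentiable one_ne_zero) (fun τ => ?_)
    (t₀ := t₀) (by simp only [hcrit, phi, zero_div]) t
  have hderiv : deriv (fun τ => phi c (deriv x τ)) τ = p τ - a * deriv x τ - b * sin (x τ) := by
    linarith [heq τ]
  rw [hderiv]
  calc |p τ - a * deriv x τ - b * sin (x τ)| ≤ |p τ| + |a| * |deriv x τ| + |b| * |sin (x τ)| := by
        rw [← abs_mul, ← abs_mul]
        exact (abs_sub _ _).trans (add_le_add_left (abs_sub _ _) _)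
    _ ≤ P + |a| * c + |b| := by
        gcongr
        exacts [hp τ, (hxc τ).le, mul_le_of_le_one_right (abs_nonneg b) (abs_sin_le_one _)]

theorem exists_isPendSol_mem_Ico_two_pi {c a b T s : ℝ} {p₀ : ℝ → ℝ}
    (hs : s ∈ solvSet c a b T p₀) :
    ∃ x, IsPendSol c a b T (fun t => p₀ t + s) x ∧ x 0 ∈ Ico 0 (2 * π) := by
  obtain ⟨x, hx⟩ := hs
  refine ⟨_, IsPendSol.sub_int_mul_two_pi hx (toIcoDiv two_pi_pos 0 (x 0)), ?_⟩
  simpa only [toIcoMod, zsmul_eq_mul, zero_add] using toIcoMod_mem_Ico two_pi_pos 0 (x 0)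

end RelPend

open RelPend in
theorem solvSet_isClosed_general (c a b T : ℝ) (hc : 0 < c) (hT : 0 < T)
    (p₀ : ℝ → ℝ) (hp₀cont : Continuous p₀) (hp₀per : Function.Periodic p₀ T) :
    IsClosed (solvSet c a b T p₀) := by
  refine isSeqClosed_iff_isClosed.1 fun s s₀ hs hlim => ?_
  choose x hx hx0 using fun n => exists_isPendSol_mem_Ico_two_pi (hs n)
  obtain ⟨P, hP⟩ := isBounded_iff_forall_norm_le.1
    ((hp₀per.isBounded_of_continuous hT.ne' hp₀cont).add (Metric.isBounded_range_of_tendsto s hlim))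
  have hforcing (n : ℕ) (t : ℝ) : |p₀ t + s n| ≤ P :=
    hP _ (add_mem_add (mem_range_self t) (mem_range_self n))
  have hZ0 (n : ℕ) : phaseCurve c (x n) 0 ∈
      Icc 0 (2 * π) ×ˢ Icc (-((P + |a| * c + |b|) * T)) ((P + |a| * c + |b|) * T) :=
    ⟨Ico_subset_Icc_self (hx0 n), abs_le.1 ((hx n).abs_phi_deriv_le hT (hforcing n) 0)⟩
  obtain ⟨z₀, -, φ, hφ, hφlim⟩ := (isCompact_Icc.prod isCompact_Icc).tendsto_subseq hZ0
  obtain ⟨z, hzT, hz⟩ := exists_periodic_hasDerivAt_of_approx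
    (ε := fun n => dist (s (φ n)) s₀)
    (lipschitzWith_pendField hc a b (fun t => p₀ t + s₀)) hT
    ((tendsto_iff_dist_tendsto_zero.1 hlim).comp hφ.tendsto_atTop)
    (fun n t _ => by rw [dist_pendField, dist_add_left])
    (fun n => (hx (φ n)).periodic_phaseCurve) (fun n => (hx (φ n)).hasDerivAt_phaseCurve hc)
    hφlim.cauchySeq
  exact ⟨_, isPendSol_of_hasDerivAt hc (hp₀cont.add continuous_const) hzT hz⟩

/-- the solvability set is closed. -/
theorem solvSet_isClosed (c a b T : ℝ) (hc : 0 < c) (ha : 0 < a) (hb : 0 < b) (hT : 0 < T)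
    (p₀ : ℝ → ℝ) (hp₀cont : Continuous p₀) (hp₀per : Function.Periodic p₀ T)
    (hp₀avg : (∫ t in (0:ℝ)..T, p₀ t) = 0) :
    IsClosed (solvSet c a b T p₀) :=
  solvSet_isClosed_general c a b T hc hT p₀ hp₀cont hp₀per
end

section
/- For every r ∈ ℝ there exists a solution of the integro-differential Dirichlet problem on [0, T]: a continuously differentiable x : [0, T] → ℝ with |x'(t)| < c for all t, such that t ↦ φ(x'(t)) is continuously differentiable on [0, T], x(0) = x(T) = r, and (φ(x'(t)))' + a·x'(t) + b·sin(x(t)) = p₀(t) + (b/T)·∫₀ᵀ sin(x(τ)) dτ for all t ∈ [0, T]. -/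
open Real Set MeasureTheory

open scoped NNReal

/-! Shooting: with `y = φ(x') + a x` the problem becomes the first-order system
`x' = φ⁻¹(y - a x)`, `y' = p₀ + K - b sin x`, whose right-hand side is globally Lipschitz, started
at `(x, y)(0) = (r, η)`. The solution depends continuously on `(K, η)`, and we need a common zero of
`K - (b / T) ∫₀ᵀ sin x` and `x(T) - r` on a rectangle `[-b, b] × [-Y, Y]`. The first changes sign
across the vertical sides because `|(b / T) ∫₀ᵀ sin x| ≤ b`; the second across the horizontal ones,
because for `|η| ≥ Y` the velocity `x' = φ⁻¹(y - a x)` keeps the sign of `η` on `[0, T]`. The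
zero is given by the Poincaré–Miranda theorem, which in dimension two follows by lifting the
argument of `f + i g` continuously over the rectangle and following it around the boundary. -/

noncomputable def phiInv (c y : ℝ) : ℝ := c * y / √(c ^ 2 + y ^ 2)

section phiInv

variable {c : ℝ} (hc : 0 < c)
include hc

lemma abs_phiInv_lt (y : ℝ) : |phiInv c y| < c := by
  have hs : 0 < √(c ^ 2 + y ^ 2) := by positivity
  have hy : |y| < √(c ^ 2 + y ^ 2) := by
    rw [← sqrt_sq_eq_abs]
    exact sqrt_lt_sqrt (sq_nonneg y) (by linarith [pow_pos hc 2])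
  rw [phiInv, abs_div, abs_mul, abs_of_pos hc, abs_of_pos hs, div_lt_iff₀ hs]
  exact mul_lt_mul_of_pos_left hy hc

lemma phi_phiInv (y : ℝ) : phi c (phiInv c y) = y := by
  have hs : 0 < √(c ^ 2 + y ^ 2) := by positivity
  have hsq : √(c ^ 2 + y ^ 2) ^ 2 = c ^ 2 + y ^ 2 := sq_sqrt (by positivity)
  have h1 : 1 - phiInv c y ^ 2 / c ^ 2 = (c / √(c ^ 2 + y ^ 2)) ^ 2 := by
    rw [phiInv]
    field_simp
    linear_combination hsq
  rw [phi, h1, sqrt_sq (by positivity), phiInv]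
  field_simp

lemma phiInv_nonneg {y : ℝ} (hy : 0 ≤ y) : 0 ≤ phiInv c y := by
  unfold phiInv; positivity

omit hc in
lemma phiInv_neg (y : ℝ) : phiInv c (-y) = -phiInv c y := by
  simp [phiInv, neg_div]

lemma hasDerivAt_phiInv (y : ℝ) :
    HasDerivAt (phiInv c) (c ^ 3 / √(c ^ 2 + y ^ 2) ^ 3) y := by
  have hs : 0 < √(c ^ 2 + y ^ 2) := by positivity
  have hsq : √(c ^ 2 + y ^ 2) ^ 2 = c ^ 2 + y ^ 2 := sq_sqrt (by positivity)
  have hsqrt : HasDerivAt (fun y => √(c ^ 2 + y ^ 2)) (y / √(c ^ 2 + y ^ 2)) y := by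
    convert ((hasDerivAt_pow 2 y).const_add (c ^ 2)).sqrt (by positivity) using 1
    field_simp
    norm_num [mul_comm]
  refine (((hasDerivAt_id y).const_mul c).div hsqrt hs.ne').congr_deriv ?_
  field_simp
  rw [id, hsq]
  ring

lemma lipschitzWith_phiInv : LipschitzWith 1 (phiInv c) := by
  refine lipschitzWith_of_nnnorm_deriv_le (fun y => (hasDerivAt_phiInv hc y).differentiableAt)
    fun y => ?_
  have hcs : c ≤ √(c ^ 2 + y ^ 2) := Real.le_sqrt_of_sq_le (by nlinarith)
  rw [← NNReal.coe_le_coe, coe_nnnorm, (hasDerivAt_phiInv hc y).deriv, NNReal.coe_one,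
    Real.norm_of_nonneg (by positivity), div_le_one (by positivity)]
  exact pow_le_pow_left₀ hc.le hcs 3

end phiInv

theorem Convex.exists_continuousOn_exp_eq {E : Type*} [NormedAddCommGroup E] [NormedSpace ℝ E]
    {s : Set E} (hs : Convex ℝ s) {G : E → ℂ} (hG : ContinuousOn G s) (hG₀ : ∀ p ∈ s, G p ≠ 0) :
    ∃ L : E → ℂ, ContinuousOn L s ∧ ∀ p ∈ s, Complex.exp (L p) = G p := by
  classical
  rcases s.eq_empty_or_nonempty with rfl | ⟨p₀, hp₀⟩
  · exact ⟨0, continuousOn_empty _, by simp⟩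
  have := hs.contractibleSpace ⟨p₀, hp₀⟩
  have := hs.locallyPathConnectedSpace
  obtain ⟨F, ⟨-, hF⟩, -⟩ := Complex.isCoveringMapOn_exp.existsUnique_continuousMap_lifts
    ⟨s.domRestrict G, hG.domRestrict⟩ (a₀ := ⟨p₀, hp₀⟩) (Complex.exp_log (hG₀ p₀ hp₀))
    fun p => hG₀ p p.2
  refine ⟨fun p => if hp : p ∈ s then F ⟨p, hp⟩ else 0, ?_, fun p hp => ?_⟩
  · rw [continuousOn_iff_continuous_domRestrict]
    convert F.continuous with p
    simp
  · simpa [hp] using congrFun hF ⟨p, hp⟩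

lemma exists_int_abs_sub_le_of_cos_nonneg {x : ℝ} (h : 0 ≤ cos x) :
    ∃ k : ℤ, |x - 2 * k * π| ≤ π / 2 := by
  have hx := Real.Angle.cos_nonneg_iff_abs_toReal_le_pi_div_two.1 (by rwa [Real.Angle.cos_coe])
  rw [Real.Angle.toReal_coe] at hx
  refine ⟨toIocDiv two_pi_pos (-π) x, ?_⟩
  have hdiv := toIocMod_add_toIocDiv_zsmul two_pi_pos (-π) x
  rw [zsmul_eq_mul] at hdiv
  rwa [show x - 2 * (toIocDiv two_pi_pos (-π) x : ℝ) * π = toIocMod two_pi_pos (-π) x by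
    linarith]

lemma abs_sub_le_of_cos_nonneg_uIcc {x y : ℝ} {k : ℤ} (hx : |x - 2 * k * π| ≤ π / 2)
    (hcos : ∀ z ∈ uIcc x y, 0 ≤ cos z) : |y - 2 * k * π| ≤ π / 2 := by
  have hπ := pi_pos
  rw [abs_le] at hx ⊢
  rcases le_total x y with hxy | hyx
  · refine ⟨by linarith, le_of_not_gt fun hy => ?_⟩
    have hz : min y (2 * k * π + π) ∈ uIcc x y := by
      rw [uIcc_of_le hxy]
      exact ⟨le_min hxy (by linarith), min_le_left _ _⟩
    refine (hcos _ hz).not_gt ?_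
    rw [← cos_sub_int_mul_two_pi _ k]
    apply cos_neg_of_pi_div_two_lt_of_lt
    · have : 2 * k * π + π / 2 < min y (2 * k * π + π) := lt_min (by linarith) (by linarith)
      linarith
    · linarith [min_le_right y (2 * k * π + π)]
  · refine ⟨le_of_not_gt fun hy => ?_, by linarith⟩
    have hz : max y (2 * k * π - π) ∈ uIcc x y := by
      rw [uIcc_of_ge hyx]
      exact ⟨le_max_left _ _, max_le hyx (by linarith)⟩
    refine (hcos _ hz).not_gt ?_
    rw [← cos_int_mul_two_pi_sub _ k]
    apply cos_neg_of_pi_div_two_lt_of_lt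
    · have : max y (2 * k * π - π) < 2 * k * π - π / 2 := max_lt (by linarith) (by linarith)
      linarith
    · linarith [le_max_right y (2 * k * π - π)]

theorem IsPreconnected.exists_int_forall_abs_sub_le_of_cos_nonneg {X : Type*}
    [TopologicalSpace X] {s : Set X} (hs : IsPreconnected s) {θ : X → ℝ} (hθ : ContinuousOn θ s)
    (hcos : ∀ p ∈ s, 0 ≤ cos (θ p)) : ∃ k : ℤ, ∀ p ∈ s, |θ p - 2 * k * π| ≤ π / 2 := by
  rcases s.eq_empty_or_nonempty with rfl | ⟨p₀, hp₀⟩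
  · exact ⟨0, by simp⟩
  obtain ⟨k, hk⟩ := exists_int_abs_sub_le_of_cos_nonneg (hcos p₀ hp₀)
  refine ⟨k, fun p hp => abs_sub_le_of_cos_nonneg_uIcc hk fun z hz => ?_⟩
  obtain ⟨q, hq, rfl⟩ := (hs.image θ hθ).ordConnected.uIcc_subset (mem_image_of_mem θ hp₀)
    (mem_image_of_mem θ hp) hz
  exact hcos q hq

lemma false_of_corner_bands {xBR xTR xTL xBL : ℝ} {kr kt kl kb : ℤ}
    (hBR : |xBR - 2 * kr * π| ≤ π / 2) (hBR' : |xBR + π / 2 - 2 * kb * π| ≤ π / 2)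
    (hTR : |xTR - 2 * kr * π| ≤ π / 2) (hTR' : |xTR - π / 2 - 2 * kt * π| ≤ π / 2)
    (hTL : |xTL - π / 2 - 2 * kt * π| ≤ π / 2) (hTL' : |xTL + π - 2 * kl * π| ≤ π / 2)
    (hBL : |xBL + π - 2 * kl * π| ≤ π / 2) (hBL' : |xBL + π / 2 - 2 * kb * π| ≤ π / 2) :
    False := by
  rw [abs_le] at hBR hBR' hTR hTR' hTL hTL' hBL hBL'
  have hπ := pi_pos
  have key (m n : ℤ) (h : (m : ℝ) * π < n * π) : m < n := by
    exact_mod_cast lt_of_mul_lt_mul_right h hπ.le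
  have := key (2 * kr) (2 * kb + 1) (by push_cast; linarith)
  have := key (2 * kb) (2 * kr + 2) (by push_cast; linarith)
  have := key (2 * kt) (2 * kr + 1) (by push_cast; linarith)
  have := key (2 * kr) (2 * kt + 2) (by push_cast; linarith)
  have := key (2 * kt) (2 * kl) (by push_cast; linarith)
  have := key (2 * kl) (2 * kt + 3) (by push_cast; linarith)
  have := key (2 * kl) (2 * kb + 2) (by push_cast; linarith)
  have := key (2 * kb) (2 * kl + 1) (by push_cast; linarith)
  omega

theorem poincare_miranda {a₁ b₁ a₂ b₂ : ℝ} (h₁ : a₁ ≤ b₁) (h₂ : a₂ ≤ b₂) {f g : ℝ × ℝ → ℝ}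
    (hf : ContinuousOn f (Icc a₁ b₁ ×ˢ Icc a₂ b₂))
    (hg : ContinuousOn g (Icc a₁ b₁ ×ˢ Icc a₂ b₂))
    (hfl : ∀ y ∈ Icc a₂ b₂, f (a₁, y) ≤ 0) (hfr : ∀ y ∈ Icc a₂ b₂, 0 ≤ f (b₁, y))
    (hgb : ∀ x ∈ Icc a₁ b₁, g (x, a₂) ≤ 0) (hgt : ∀ x ∈ Icc a₁ b₁, 0 ≤ g (x, b₂)) :
    ∃ p ∈ Icc a₁ b₁ ×ˢ Icc a₂ b₂, f p = 0 ∧ g p = 0 := by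
  by_contra! hne
  set Q := Icc a₁ b₁ ×ˢ Icc a₂ b₂
  obtain ⟨L, hL, hexp⟩ := ((convex_Icc a₁ b₁).prod (convex_Icc a₂ b₂)).exists_continuousOn_exp_eq
    (G := fun p => f p + g p * Complex.I) (by fun_prop) fun p hp h =>
      hne p hp (by simpa using congrArg Complex.re h) (by simpa using congrArg Complex.im h)
  set θ := fun p => (L p).im
  have hf_eq : ∀ p ∈ Q, f p = exp (L p).re * cos (θ p) := fun p hp => by
    rw [← Complex.exp_re, hexp p hp]; simp
  have hg_eq : ∀ p ∈ Q, g p = exp (L p).re * sin (θ p) := fun p hp => by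
    rw [← Complex.exp_im, hexp p hp]; simp
  have band (e : ℝ → ℝ × ℝ) (I : Set ℝ) (α : ℝ) (hI : IsPreconnected I) (he : Continuous e)
      (heQ : MapsTo e I Q) (hcos : ∀ t ∈ I, 0 ≤ cos (θ (e t) + α)) :
      ∃ k : ℤ, ∀ t ∈ I, |θ (e t) + α - 2 * k * π| ≤ π / 2 :=
    hI.exists_int_forall_abs_sub_le_of_cos_nonneg
      ((Complex.continuous_im.comp_continuousOn hL |>.comp he.continuousOn heQ).add
        continuousOn_const) hcos
  have ha₁ := left_mem_Icc.2 h₁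
  have hb₁ := right_mem_Icc.2 h₁
  have ha₂ := left_mem_Icc.2 h₂
  have hb₂ := right_mem_Icc.2 h₂
  obtain ⟨kr, hkr⟩ := band (fun y => (b₁, y)) (Icc a₂ b₂) 0 isPreconnected_Icc (by fun_prop)
    (fun y hy => mk_mem_prod hb₁ hy) fun y hy => by
      rw [add_zero]
      exact nonneg_of_mul_nonneg_right (hf_eq _ (mk_mem_prod hb₁ hy) ▸ hfr y hy) (exp_pos _)
  obtain ⟨kt, hkt⟩ := band (fun x => (x, b₂)) (Icc a₁ b₁) (-(π / 2)) isPreconnected_Icc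
    (by fun_prop) (fun x hx => mk_mem_prod hx hb₂) fun x hx => by
      rw [← sub_eq_add_neg, cos_sub_pi_div_two]
      exact nonneg_of_mul_nonneg_right (hg_eq _ (mk_mem_prod hx hb₂) ▸ hgt x hx) (exp_pos _)
  obtain ⟨kl, hkl⟩ := band (fun y => (a₁, y)) (Icc a₂ b₂) π isPreconnected_Icc (by fun_prop)
    (fun y hy => mk_mem_prod ha₁ hy) fun y hy => by
      rw [cos_add_pi, neg_nonneg]
      exact nonpos_of_mul_nonpos_right (hf_eq _ (mk_mem_prod ha₁ hy) ▸ hfl y hy) (exp_pos _)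
  obtain ⟨kb, hkb⟩ := band (fun x => (x, a₂)) (Icc a₁ b₁) (π / 2) isPreconnected_Icc
    (by fun_prop) (fun x hx => mk_mem_prod hx ha₂) fun x hx => by
      rw [cos_add_pi_div_two, neg_nonneg]
      exact nonpos_of_mul_nonpos_right (hg_eq _ (mk_mem_prod hx ha₂) ▸ hgb x hx) (exp_pos _)
  simp only [add_zero] at hkr
  simp only [← sub_eq_add_neg] at hkt
  -- Going once around the boundary, the band index is unchanged at three corners and grows by one
  -- at the top-left corner, which is impossible for a closed loop.
  exact false_of_corner_bands (hkr a₂ ha₂) (hkb b₁ hb₁) (hkr b₂ hb₂) (hkt b₁ hb₁) (hkt a₁ ha₁)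
    (hkl b₂ hb₂) (hkl a₂ ha₂) (hkb a₁ ha₁)

section Prod

variable {𝕜 E F : Type*} [NontriviallyNormedField 𝕜] [NormedAddCommGroup E] [NormedSpace 𝕜 E]
  [NormedAddCommGroup F] [NormedSpace 𝕜 F] {f : 𝕜 → E × F} {f' : E × F} {s : Set 𝕜} {x : 𝕜}

theorem HasDerivWithinAt.fst (h : HasDerivWithinAt f f' s x) :
    HasDerivWithinAt (fun y => (f y).1) f'.1 s x :=
  (hasFDerivAt_fst (p := f x)).comp_hasDerivWithinAt x h

theorem HasDerivWithinAt.snd (h : HasDerivWithinAt f f' s x) :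
    HasDerivWithinAt (fun y => (f y).2) f'.2 s x :=
  (hasFDerivAt_snd (p := f x)).comp_hasDerivWithinAt x h

end Prod

theorem mul_gronwallBound (d δ K ε x : ℝ) :
    d * gronwallBound δ K ε x = gronwallBound (d * δ) K (d * ε) x := by
  simp only [gronwallBound]
  split_ifs <;> ring

lemma abs_integral_sin_le {T : ℝ} (hT : 0 ≤ T) (x : ℝ → ℝ) :
    |∫ τ in (0 : ℝ)..T, sin (x τ)| ≤ T := by
  simpa [abs_of_nonneg hT] using
    intervalIntegral.norm_integral_le_of_norm_le_const (a := 0) (b := T) (C := 1)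
      (f := fun τ => sin (x τ)) fun τ _ => abs_sin_le_one (x τ)

/-- With `y = φ(x') + a x`, the equation `(φ(x'))' + a x' + b sin x = p` becomes the first-order
system `x' = φ⁻¹(y - a x)`, `y' = p - b sin x`. -/
noncomputable def relPendulumField (c a b : ℝ) (p : ℝ → ℝ) (t : ℝ) (u : ℝ × ℝ) : ℝ × ℝ :=
  (phiInv c (u.2 - a * u.1), p t - b * sin u.1)

section relPendulumField

variable {c a b T : ℝ} {p : ℝ → ℝ} {u : ℝ → ℝ × ℝ}

lemma relPendulumField_neg (t : ℝ) (z : ℝ × ℝ) :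
    relPendulumField c a b (-p) t (-z) = -relPendulumField c a b p t z := by
  simp only [relPendulumField, Prod.fst_neg, Prod.snd_neg, Pi.neg_apply, sin_neg, Prod.neg_mk,
    ← phiInv_neg]
  ring_nf

lemma lipschitzWith_relPendulumField (hc : 0 < c) (t : ℝ) :
    LipschitzWith (1 + ‖a‖₊ + ‖b‖₊) (relPendulumField c a b p t) := by
  refine LipschitzWith.of_dist_le_mul fun z z' => ?_
  have h₁ : |z.1 - z'.1| ≤ dist z z' := le_max_left _ _
  have h₂ : |z.2 - z'.2| ≤ dist z z' := le_max_right _ _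
  have hphi := (lipschitzWith_phiInv hc).dist_le_mul (z.2 - a * z.1) (z'.2 - a * z'.1)
  have hsin := abs_sin_sub_sin_le z.1 z'.1
  simp only [NNReal.coe_one, one_mul, Real.dist_eq] at hphi
  simp only [relPendulumField, Prod.dist_eq, Real.dist_eq, NNReal.coe_add, NNReal.coe_one,
    coe_nnnorm, Real.norm_eq_abs]
  refine max_le (hphi.trans ?_) ?_
  · calc |z.2 - a * z.1 - (z'.2 - a * z'.1)| = |(z.2 - z'.2) - a * (z.1 - z'.1)| := by ring_nf
      _ ≤ |z.2 - z'.2| + |a| * |z.1 - z'.1| := by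
        rw [← abs_mul]; exact abs_sub _ _
      _ ≤ (1 + |a| + |b|) * dist z z' := by
        nlinarith [abs_nonneg a, abs_nonneg b, abs_nonneg (z.1 - z'.1),
          (dist_nonneg : 0 ≤ dist z z')]
  · calc |p t - b * sin z.1 - (p t - b * sin z'.1)| = |b| * |sin z.1 - sin z'.1| := by
          rw [← abs_mul, ← abs_neg]; ring_nf
      _ ≤ (1 + |a| + |b|) * dist z z' := by
        nlinarith [abs_nonneg a, abs_nonneg b, abs_nonneg (sin z.1 - sin z'.1),
          (dist_nonneg : 0 ≤ dist z z')]

lemma norm_relPendulumField_le (hc : 0 < c) {t M : ℝ} (hM : |p t| ≤ M) (z : ℝ × ℝ) :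
    ‖relPendulumField c a b p t z‖ ≤ max c (M + |b|) := by
  refine max_le ((abs_phiInv_lt hc _).le.trans (le_max_left _ _)) (le_trans ?_ (le_max_right _ _))
  calc |p t - b * sin z.1| ≤ |p t| + |b| * |sin z.1| := by rw [← abs_mul]; exact abs_sub _ _
    _ ≤ M + |b| := by nlinarith [abs_sin_le_one z.1, abs_nonneg b]

theorem exists_hasDerivWithinAt_relPendulumField (hc : 0 < c) (hT : 0 ≤ T)
    (hp : ContinuousOn p (Icc 0 T)) (u₀ : ℝ × ℝ) :
    ∃ u : ℝ → ℝ × ℝ, u 0 = u₀ ∧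
      ∀ t ∈ Icc 0 T, HasDerivWithinAt u (relPendulumField c a b p t (u t)) (Icc 0 T) t := by
  obtain ⟨M, hM⟩ := isCompact_Icc.exists_bound_of_continuousOn hp
  set L : ℝ≥0 := ⟨max c (M + |b|), hc.le.trans (le_max_left _ _)⟩
  have hpl : IsPicardLindelof (relPendulumField c a b p) (tmin := 0) (tmax := T)
      ⟨0, left_mem_Icc.2 hT⟩ u₀ (L * ⟨T, hT⟩) 0 L (1 + ‖a‖₊ + ‖b‖₊) := by
    refine ⟨fun t _ => (lipschitzWith_relPendulumField hc t).lipschitzOnWith, fun u _ => ?_,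
      fun t ht u _ => norm_relPendulumField_le hc (hM t ht) u, ?_⟩
    · exact continuousOn_const.prodMk (hp.sub continuousOn_const)
    · show (L : ℝ) * max (T - 0) (0 - 0) ≤ L * T - 0
      simp [max_eq_left hT]
  exact hpl.exists_eq_forall_mem_Icc_hasDerivWithinAt₀

theorem dist_le_gronwallBound_of_hasDerivWithinAt_relPendulumField (hc : 0 < c)
    {p' : ℝ → ℝ} {u' : ℝ → ℝ × ℝ} {δ ε : ℝ}
    (hu : ∀ t ∈ Icc 0 T, HasDerivWithinAt u (relPendulumField c a b p t (u t)) (Icc 0 T) t)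
    (hu' : ∀ t ∈ Icc 0 T, HasDerivWithinAt u' (relPendulumField c a b p' t (u' t)) (Icc 0 T) t)
    (hδ : dist (u 0) (u' 0) ≤ δ) (hε : ∀ t ∈ Icc 0 T, |p' t - p t| ≤ ε) :
    ∀ t ∈ Icc 0 T, dist (u t) (u' t) ≤ gronwallBound δ (1 + |a| + |b|) ε t := by
  have hIci {v : ℝ → ℝ × ℝ} {v' : ℝ → ℝ × ℝ}
      (hv : ∀ t ∈ Icc 0 T, HasDerivWithinAt v (v' t) (Icc 0 T) t) :
      ∀ t ∈ Ico 0 T, HasDerivWithinAt v (v' t) (Ici t) t := fun t ht =>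
    (hv t (Ico_subset_Icc_self ht)).mono_of_mem_nhdsWithin <| Filter.mem_of_superset
      (Ico_mem_nhdsGE ht.2) (Ico_subset_Icc_self.trans (Icc_subset_Icc ht.1 le_rfl))
  intro t ht
  have := dist_le_of_approx_trajectories_ODE (lipschitzWith_relPendulumField hc)
    (fun t ht => (hu t ht).continuousWithinAt) (hIci hu) (fun _ _ => (dist_self _).le)
    (fun t ht => (hu' t ht).continuousWithinAt) (hIci hu') (εg := ε)
    (fun t ht => ?_) hδ t ht
  · simpa using this
  · rw [Prod.dist_eq]
    simpa [relPendulumField, Real.dist_eq] using hε t (Ico_subset_Icc_self ht)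

theorem fst_zero_le_fst_of_hasDerivWithinAt_relPendulumField (hc : 0 < c) (ha : 0 ≤ a)
    (hT : 0 ≤ T) {M : ℝ} (hM : ∀ t ∈ Icc 0 T, |p t| ≤ M)
    (hu : ∀ t ∈ Icc 0 T, HasDerivWithinAt u (relPendulumField c a b p t (u t)) (Icc 0 T) t)
    (h₀ : max c (M + |b|) * T * (1 + a) + a * |(u 0).1| ≤ (u 0).2) :
    (u 0).1 ≤ (u T).1 := by
  set L := max c (M + |b|)
  have hL : 0 ≤ L := hc.le.trans (le_max_left _ _)
  have hdist : ∀ t ∈ Icc 0 T, ‖u t - u 0‖ ≤ L * T := fun t ht => by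
    have := (convex_Icc 0 T).norm_image_sub_le_of_norm_hasDerivWithin_le hu
      (fun t ht => norm_relPendulumField_le hc (hM t ht) _) (left_mem_Icc.2 hT) ht
    rw [sub_zero, Real.norm_of_nonneg ht.1] at this
    exact this.trans (mul_le_mul_of_nonneg_left ht.2 hL)
  have hslope : ∀ t ∈ Icc 0 T, 0 ≤ (u t).2 - a * (u t).1 := fun t ht => by
    have h₁ := (norm_fst_le (u t - u 0)).trans (hdist t ht)
    have h₂ := (norm_snd_le (u t - u 0)).trans (hdist t ht)
    rw [Prod.fst_sub, Real.norm_eq_abs, abs_le] at h₁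
    rw [Prod.snd_sub, Real.norm_eq_abs, abs_le] at h₂
    have hx : (u t).1 ≤ |(u 0).1| + L * T := by linarith [le_abs_self (u 0).1]
    nlinarith [mul_le_mul_of_nonneg_left hx ha]
  have hmono : MonotoneOn (fun t => (u t).1) (Icc 0 T) :=
    monotoneOn_of_hasDerivWithinAt_nonneg (convex_Icc 0 T)
      (fun t ht => (hu t ht).fst.continuousWithinAt)
      (fun t ht => (hu t (interior_subset ht)).fst.mono interior_subset)
      fun t ht => phiInv_nonneg hc (hslope t (interior_subset ht))
  exact hmono (left_mem_Icc.2 hT) (right_mem_Icc.2 hT) hT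

theorem fst_le_fst_zero_of_hasDerivWithinAt_relPendulumField (hc : 0 < c) (ha : 0 ≤ a)
    (hT : 0 ≤ T) {M : ℝ} (hM : ∀ t ∈ Icc 0 T, |p t| ≤ M)
    (hu : ∀ t ∈ Icc 0 T, HasDerivWithinAt u (relPendulumField c a b p t (u t)) (Icc 0 T) t)
    (h₀ : (u 0).2 ≤ -(max c (M + |b|) * T * (1 + a) + a * |(u 0).1|)) :
    (u T).1 ≤ (u 0).1 := by
  have := fst_zero_le_fst_of_hasDerivWithinAt_relPendulumField (u := -u) (p := -p) hc ha hT
    (by simpa using hM) (fun t ht => by simpa [relPendulumField_neg] using (hu t ht).neg)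
    (by simp only [Pi.neg_apply, Prod.fst_neg, Prod.snd_neg, abs_neg]; linarith)
  simpa using this

theorem exists_relPendulum_of_hasDerivWithinAt (hc : 0 < c) (hp : ContinuousOn p (Icc 0 T))
    (hu : ∀ t ∈ Icc 0 T, HasDerivWithinAt u (relPendulumField c a b p t (u t)) (Icc 0 T) t) :
    ∃ v w : ℝ → ℝ, ContinuousOn v (Icc 0 T) ∧ ContinuousOn w (Icc 0 T) ∧
      (∀ t ∈ Icc 0 T, HasDerivWithinAt (fun τ => (u τ).1) (v t) (Icc 0 T) t) ∧
      (∀ t, |v t| < c) ∧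
      (∀ t ∈ Icc 0 T, HasDerivWithinAt (fun τ => phi c (v τ)) (w t) (Icc 0 T) t) ∧
      ∀ t, w t + a * v t + b * sin (u t).1 = p t := by
  have hu_cont : ContinuousOn u (Icc 0 T) := fun t ht => (hu t ht).continuousWithinAt
  have hv_cont : ContinuousOn (fun t => phiInv c ((u t).2 - a * (u t).1)) (Icc 0 T) :=
    (lipschitzWith_phiInv hc).continuous.comp_continuousOn (by fun_prop)
  refine ⟨fun t => phiInv c ((u t).2 - a * (u t).1),
    fun t => p t - b * sin (u t).1 - a * phiInv c ((u t).2 - a * (u t).1), hv_cont,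
    by fun_prop, fun t ht => (hu t ht).fst, fun t => abs_phiInv_lt hc _, fun t ht => ?_,
    fun t => by ring⟩
  simp only [phi_phiInv hc]
  exact (hu t ht).snd.sub ((hu t ht).fst.const_mul a)

end relPendulumField

def IsShootingFamily (c a b T r : ℝ) (p₀ : ℝ → ℝ) (sol : ℝ × ℝ → ℝ → ℝ × ℝ) : Prop :=
  ∀ P : ℝ × ℝ, sol P 0 = (r, P.2) ∧
    ∀ t ∈ Icc 0 T, HasDerivWithinAt (sol P) (relPendulumField c a b (p₀ · + P.1) t (sol P t))
      (Icc 0 T) t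

theorem exists_isShootingFamily {c a b T : ℝ} (hc : 0 < c) (hT : 0 ≤ T) {p₀ : ℝ → ℝ}
    (hp₀ : Continuous p₀) (r : ℝ) : ∃ sol, IsShootingFamily c a b T r p₀ sol := by
  choose sol hsol₀ hsol using fun P : ℝ × ℝ =>
    exists_hasDerivWithinAt_relPendulumField hc hT (p := (p₀ · + P.1)) (by fun_prop) (r, P.2)
  exact ⟨sol, fun P => ⟨hsol₀ P, hsol P⟩⟩

namespace IsShootingFamily

variable {c a b T r : ℝ} {p₀ : ℝ → ℝ} {sol : ℝ × ℝ → ℝ → ℝ × ℝ}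
  (hsol : IsShootingFamily c a b T r p₀ sol)
include hsol

theorem continuous_apply (hc : 0 < c) {t : ℝ} (ht : t ∈ Icc 0 T) : Continuous fun P => sol P t := by
  set K := 1 + |a| + |b|
  refine (LipschitzWith.of_dist_le' (K := gronwallBound 1 K 1 T) fun P P' => ?_).continuous
  calc dist (sol P t) (sol P' t) ≤ gronwallBound (dist P P') K (dist P P') t :=
        dist_le_gronwallBound_of_hasDerivWithinAt_relPendulumField hc (hsol P).2 (hsol P').2
          (by simp [(hsol P).1, (hsol P').1, Prod.dist_eq])
          (fun τ _ => by simp [Prod.dist_eq, Real.dist_eq, abs_sub_comm]) t ht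
    _ = dist P P' * gronwallBound 1 K 1 t := by rw [mul_gronwallBound, mul_one]
    _ ≤ dist P P' * gronwallBound 1 K 1 T := by
        gcongr
        exact gronwallBound_mono zero_le_one zero_le_one (by positivity) ht.2
    _ = gronwallBound 1 K 1 T * dist P P' := mul_comm _ _

theorem continuous_integral_sin (hc : 0 < c) (hT : 0 ≤ T) :
    Continuous fun P => ∫ τ in (0 : ℝ)..T, sin (sol P τ).1 := by
  have hIoc : uIoc 0 T ⊆ Icc 0 T := by rw [uIoc_of_le hT]; exact Ioc_subset_Icc_self
  refine intervalIntegral.continuous_of_dominated_interval (bound := fun _ => 1)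
    (fun P => ?_) (fun P => ae_of_all _ fun τ _ => abs_sin_le_one _) intervalIntegrable_const
    (ae_of_all _ fun τ hτ => ?_)
  · have : ContinuousOn (sol P) (Icc 0 T) := fun t ht => ((hsol P).2 t ht).continuousWithinAt
    exact ((continuous_sin.comp_continuousOn this.fst).mono hIoc).aestronglyMeasurable
      measurableSet_uIoc
  · exact continuous_sin.comp (hsol.continuous_apply hc (hIoc hτ)).fst

theorem exists_param_solving_dirichlet (hc : 0 < c) (ha : 0 ≤ a) (hb : 0 ≤ b) (hT : 0 < T)
    {M : ℝ} (hM : ∀ t ∈ Icc 0 T, |p₀ t| ≤ M) :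
    ∃ P : ℝ × ℝ, P.1 = b / T * ∫ τ in (0 : ℝ)..T, sin (sol P τ).1 ∧ (sol P T).1 = r := by
  have hpK {K : ℝ} (hK : K ∈ Icc (-b) b) (t : ℝ) (ht : t ∈ Icc 0 T) : |p₀ t + K| ≤ M + b :=
    (abs_add_le _ _).trans (add_le_add (hM t ht) (abs_le.2 hK))
  have hSb (P : ℝ × ℝ) : |b / T * ∫ τ in (0 : ℝ)..T, sin (sol P τ).1| ≤ b := by
    rw [abs_mul, abs_of_nonneg (div_nonneg hb hT.le), div_mul_comm]
    exact mul_le_of_le_one_left hb ((div_le_one hT).2 (abs_integral_sin_le hT.le _))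
  set Y := max c (M + b + |b|) * T * (1 + a) + a * |r|
  obtain ⟨P, -, hP₁, hP₂⟩ := poincare_miranda (a₂ := -Y) (b₂ := Y) (neg_le_self hb)
    (neg_le_self (by positivity)) (f := fun P => P.1 - b / T * ∫ τ in (0 : ℝ)..T, sin (sol P τ).1)
    (g := fun P => (sol P T).1 - r)
    (by have := hsol.continuous_integral_sin hc hT.le; fun_prop)
    (by have := hsol.continuous_apply hc (right_mem_Icc.2 hT.le); fun_prop)
    (fun η _ => by linarith [(abs_le.1 (hSb (-b, η))).1])
    (fun η _ => by linarith [(abs_le.1 (hSb (b, η))).2])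
    (fun K hK => by
      have := fst_le_fst_zero_of_hasDerivWithinAt_relPendulumField hc ha hT.le (hpK hK)
        (hsol (K, -Y)).2 (by simp [(hsol _).1, Y])
      simpa [(hsol _).1] using this)
    (fun K hK => by
      have := fst_zero_le_fst_of_hasDerivWithinAt_relPendulumField hc ha hT.le (hpK hK)
        (hsol (K, Y)).2 (by simp [(hsol _).1, Y])
      simpa [(hsol _).1] using this)
  exact ⟨P, sub_eq_zero.1 hP₁, sub_eq_zero.1 hP₂⟩

end IsShootingFamily

theorem dirichlet_integrodifferential_general (c a b T : ℝ) (hc : 0 < c) (ha : 0 < a) (hb : 0 < b)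
    (hT : 0 < T) (p₀ : ℝ → ℝ) (hp₀cont : Continuous p₀) (r : ℝ) :
    ∃ x v w : ℝ → ℝ,
      ContinuousOn v (Set.Icc 0 T) ∧ ContinuousOn w (Set.Icc 0 T) ∧
      (∀ t ∈ Set.Icc (0:ℝ) T, HasDerivWithinAt x (v t) (Set.Icc 0 T) t) ∧
      (∀ t ∈ Set.Icc (0:ℝ) T, |v t| < c) ∧
      (∀ t ∈ Set.Icc (0:ℝ) T, HasDerivWithinAt (fun τ : ℝ => phi c (v τ)) (w t) (Set.Icc 0 T) t) ∧
      x 0 = r ∧ x T = r ∧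
      (∀ t ∈ Set.Icc (0:ℝ) T,
        w t + a * v t + b * Real.sin (x t)
          = p₀ t + (b / T) * ∫ τ in (0:ℝ)..T, Real.sin (x τ)) := by
  obtain ⟨sol, hsol⟩ := exists_isShootingFamily (a := a) (b := b) hc hT.le hp₀cont r
  obtain ⟨M, hM⟩ := isCompact_Icc.exists_bound_of_continuousOn (hp₀cont.continuousOn (s := Icc 0 T))
  obtain ⟨P, hK, hxT⟩ := hsol.exists_param_solving_dirichlet hc ha.le hb.le hT hM
  obtain ⟨v, w, hv, hw, hxv, hvc, hvw, heq⟩ :=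
    exists_relPendulum_of_hasDerivWithinAt hc (by fun_prop) (hsol P).2
  refine ⟨fun t => (sol P t).1, v, w, hv, hw, hxv, fun t _ => hvc t, hvw, by simp [(hsol P).1],
    hxT, fun t _ => ?_⟩
  rw [heq, hK]

/-- for every `r` the integro-differential Dirichlet problem on `[0, T]`
has a solution with `x(0) = x(T) = r`. Here `v` is the derivative of `x` and `w` the
derivative of `t ↦ φ(x'(t))` on `[0, T]`, both continuous. -/
theorem dirichlet_integrodifferential (c a b T : ℝ) (hc : 0 < c) (ha : 0 < a) (hb : 0 < b)
    (hT : 0 < T) (p₀ : ℝ → ℝ) (hp₀cont : Continuous p₀) (hp₀per : Function.Periodic p₀ T)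
    (hp₀avg : (∫ t in (0:ℝ)..T, p₀ t) = 0) (r : ℝ) :
    ∃ x v w : ℝ → ℝ,
      ContinuousOn v (Set.Icc 0 T) ∧ ContinuousOn w (Set.Icc 0 T) ∧
      (∀ t ∈ Set.Icc (0:ℝ) T, HasDerivWithinAt x (v t) (Set.Icc 0 T) t) ∧
      (∀ t ∈ Set.Icc (0:ℝ) T, |v t| < c) ∧
      (∀ t ∈ Set.Icc (0:ℝ) T, HasDerivWithinAt (fun τ : ℝ => phi c (v τ)) (w t) (Set.Icc 0 T) t) ∧
      x 0 = r ∧ x T = r ∧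
      (∀ t ∈ Set.Icc (0:ℝ) T,
        w t + a * v t + b * Real.sin (x t)
          = p₀ t + (b / T) * ∫ τ in (0:ℝ)..T, Real.sin (x τ)) :=
  dirichlet_integrodifferential_general c a b T hc ha hb hT p₀ hp₀cont r
end
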